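/- For π ∈ ℂ \ {0}, set P(λ) = (1+|π|²)^{-1} [[λ^{-1}|π|² + λ, π(λ^{-2} − 1)],[conj(π)(1 − λ²), λ|π|² + λ^{-1}]]. Then: (1) P(λ) ∈ SU(2) for all λ on the unit circle; (2) P(1) = I; (3) i·(dP/dλ)(1) = (i/(1+|π|²)) [[1−|π|², −2π],[−2conj(π), |π|²−1]], and under the identification of su(2) with ℝ³ (x ↔ (−i/2)[[−x₃, x₁+ix₂],[x₁−ix₂, x₃]]) this matrix corresponds to the vector 2σ^{-1}(π), where σ: S² → ℂ ∪ {∞} is stereographic projection from the south pole. -/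

import Mathlib

open Matrix

/-- Identification of `ℝ³` with `su(2)`:
`x ↔ (−i/2)[[−x₃, x₁+ix₂],[x₁−ix₂, x₃]]`. -/
noncomputable def toSu2 (x : Fin 3 → ℝ) : Matrix (Fin 2) (Fin 2) ℂ :=
  (-Complex.I / 2) •
    !![-(x 2 : ℂ), (x 0 : ℂ) + (x 1 : ℂ) * Complex.I;
       (x 0 : ℂ) - (x 1 : ℂ) * Complex.I, (x 2 : ℂ)]

/-- The matrix `P(λ)` (principal solution along an edge). -/
noncomputable def Pmat (π l : ℂ) : Matrix (Fin 2) (Fin 2) ℂ :=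
  ((1 : ℂ) + (‖π‖ : ℂ) ^ 2)⁻¹ •
    !![l⁻¹ * (‖π‖ : ℂ) ^ 2 + l, π * ((l⁻¹) ^ 2 - 1);
       starRingEnd ℂ π * (1 - l ^ 2), l * (‖π‖ : ℂ) ^ 2 + l⁻¹]


/-!
On the unit circle `conj λ = λ⁻¹`, so `P(λ) = c • [[a, b], [-conj b, conj a]]` with
`c = (1 + |π|²)⁻¹`, `a = λ⁻¹|π|² + λ`, `b = π(λ⁻² - 1)`. A matrix of this quaternionic shape
satisfies `M Mᴴ = c² (|a|² + |b|²) • 1` and `det M = c² (|a|² + |b|²)`, and here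
`|a|² + |b|² = (1 + |π|²)²` because the `λ^{±2}` terms cancel. The remaining claims are direct
computations with Laurent polynomials at `λ = 1`.
-/

open ComplexConjugate

def quatMatrix (a b : ℂ) : Matrix (Fin 2) (Fin 2) ℂ := !![a, b; -conj b, conj a]

lemma smul_quatMatrix_mul_conjTranspose (c a b : ℂ) :
    (c • quatMatrix a b) * (c • quatMatrix a b)ᴴ
      = (c * conj c * (a * conj a + b * conj b)) • (1 : Matrix (Fin 2) (Fin 2) ℂ) := by
  ext i j
  fin_cases i <;> fin_cases j <;> simp [quatMatrix, mul_apply, Fin.sum_univ_two] <;> ring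

lemma det_smul_quatMatrix (c a b : ℂ) :
    (c • quatMatrix a b).det = c ^ 2 * (a * conj a + b * conj b) := by
  simp [quatMatrix, det_fin_two_of]
  ring

lemma one_add_norm_sq_ne_zero (z : ℂ) : (1 : ℂ) + (‖z‖ : ℂ) ^ 2 ≠ 0 := by
  exact_mod_cast (by positivity : (1 : ℝ) + ‖z‖ ^ 2 ≠ 0)

lemma Pmat_eq_smul_quatMatrix (π : ℂ) {l : ℂ} (hl : ‖l‖ = 1) :
    Pmat π l = ((1 : ℂ) + (‖π‖ : ℂ) ^ 2)⁻¹ •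
      quatMatrix (l⁻¹ * (‖π‖ : ℂ) ^ 2 + l) (π * (l⁻¹ ^ 2 - 1)) := by
  have hl' : conj l = l⁻¹ := (Complex.inv_eq_conj hl).symm
  ext i j
  fin_cases i <;> fin_cases j <;> simp [Pmat, quatMatrix, hl', Complex.conj_ofReal]
  ring

lemma Pmat_coeff_mul_conj_add_mul_conj (π : ℂ) {l : ℂ} (hl : ‖l‖ = 1) :
    (l⁻¹ * (‖π‖ : ℂ) ^ 2 + l) * conj (l⁻¹ * (‖π‖ : ℂ) ^ 2 + l)
      + π * (l⁻¹ ^ 2 - 1) * conj (π * (l⁻¹ ^ 2 - 1)) = ((1 : ℂ) + (‖π‖ : ℂ) ^ 2) ^ 2 := by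
  have hl' : conj l = l⁻¹ := (Complex.inv_eq_conj hl).symm
  have hl0 : l ≠ 0 := by rintro rfl; simp at hl
  have hπ : π * conj π = (‖π‖ : ℂ) ^ 2 := Complex.mul_conj' π
  simp only [map_add, map_mul, map_sub, map_pow, map_inv₀, map_one, hl', Complex.conj_ofReal,
    inv_inv]
  field_simp
  linear_combination -(l ^ 2 - 1) ^ 2 * hπ

lemma Pmat_mem_specialUnitaryGroup (π : ℂ) {l : ℂ} (hl : ‖l‖ = 1) :
    Pmat π l ∈ specialUnitaryGroup (Fin 2) ℂ := by
  have hn := one_add_norm_sq_ne_zero π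
  have hc : conj ((1 : ℂ) + (‖π‖ : ℂ) ^ 2)⁻¹ = ((1 : ℂ) + (‖π‖ : ℂ) ^ 2)⁻¹ := by
    simp [Complex.conj_ofReal]
  rw [mem_specialUnitaryGroup_iff, mem_unitaryGroup_iff, star_eq_conjTranspose,
    Pmat_eq_smul_quatMatrix π hl, smul_quatMatrix_mul_conjTranspose, det_smul_quatMatrix,
    Pmat_coeff_mul_conj_add_mul_conj π hl, hc]
  constructor
  · rw [← one_smul ℂ (1 : Matrix (Fin 2) (Fin 2) ℂ)]
    congr 1
    field_simp
    simp
  · field_simp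

lemma Pmat_one (π : ℂ) : Pmat π 1 = 1 := by
  have hn := one_add_norm_sq_ne_zero π
  ext i j
  fin_cases i <;> fin_cases j <;> simp [Pmat] <;> field_simp <;> ring

lemma deriv_Pmat_one (π : ℂ) :
    Matrix.of (fun i j => deriv (fun l => Pmat π l i j) 1)
      = ((1 : ℂ) + (‖π‖ : ℂ) ^ 2)⁻¹ •
        !![1 - (‖π‖ : ℂ) ^ 2, -2 * π; -2 * conj π, (‖π‖ : ℂ) ^ 2 - 1] := by
  ext i j
  fin_cases i <;> fin_cases j <;>
    simp (disch := fun_prop (disch := norm_num)) [Pmat, - inv_pow] <;> left <;> ring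

lemma toSu2_re_im (z : ℂ) (t : ℝ) :
    toSu2 ![z.re, z.im, t] = (-Complex.I / 2) • !![-(t : ℂ), z; conj z, t] := by
  have hconj : (z.re : ℂ) - z.im * Complex.I = conj z := by
    simp [Complex.ext_iff]
  simp [toSu2, Complex.re_add_im, hconj]

lemma I_smul_deriv_Pmat_one_eq_toSu2 (π : ℂ) :
    Complex.I • (((1 : ℂ) + (‖π‖ : ℂ) ^ 2)⁻¹ •
        !![1 - (‖π‖ : ℂ) ^ 2, -2 * π; -2 * conj π, (‖π‖ : ℂ) ^ 2 - 1])
      = toSu2 (fun k => 2 * ((1 + ‖π‖ ^ 2)⁻¹ * ![2 * π.re, 2 * π.im, 1 - ‖π‖ ^ 2] k)) := by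
  set c : ℝ := (1 + ‖π‖ ^ 2)⁻¹
  have hvec : (fun k => 2 * (c * ![2 * π.re, 2 * π.im, 1 - ‖π‖ ^ 2] k))
      = ![(4 * c * π).re, (4 * c * π).im, 2 * c * (1 - ‖π‖ ^ 2)] := by
    ext k
    fin_cases k <;> simp <;> ring
  rw [hvec, toSu2_re_im]
  ext i j
  fin_cases i <;> fin_cases j <;> simp [c, map_ofNat] <;> ring

theorem Pmat_properties_general (π : ℂ) :
    (∀ l : ℂ, ‖l‖ = 1 → Pmat π l * (Pmat π l)ᴴ = 1 ∧ (Pmat π l).det = 1) ∧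
    Pmat π 1 = 1 ∧
    Matrix.of (fun i j => deriv (fun l => Pmat π l i j) 1)
      = ((1 : ℂ) + (‖π‖ : ℂ) ^ 2)⁻¹ •
        !![1 - (‖π‖ : ℂ) ^ 2, -2 * π;
           -2 * starRingEnd ℂ π, (‖π‖ : ℂ) ^ 2 - 1] ∧
    Complex.I • (((1 : ℂ) + (‖π‖ : ℂ) ^ 2)⁻¹ •
        !![1 - (‖π‖ : ℂ) ^ 2, -2 * π;
           -2 * starRingEnd ℂ π, (‖π‖ : ℂ) ^ 2 - 1])
      = toSu2 (fun k =>
          2 * ((1 + ‖π‖ ^ 2)⁻¹ * ![2 * π.re, 2 * π.im, 1 - ‖π‖ ^ 2] k)) := by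
  refine ⟨fun l hl => ?_, Pmat_one π, deriv_Pmat_one π, I_smul_deriv_Pmat_one_eq_toSu2 π⟩
  have hSU := Pmat_mem_specialUnitaryGroup π hl
  rw [mem_specialUnitaryGroup_iff, mem_unitaryGroup_iff, star_eq_conjTranspose] at hSU
  exact hSU

/-- `P(λ) ∈ SU(2)` on the unit circle, `P(1) = I`, and
`i·P'(1)` is the `su(2)` matrix corresponding to the vector `2σ⁻¹(π)`,
where `σ⁻¹(π) = (1+|π|²)⁻¹(2Re π, 2Im π, 1−|π|²)` is the inverse stereographic
projection from the south pole. -/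
theorem Pmat_properties (π : ℂ) (hπ : π ≠ 0) :
    (∀ l : ℂ, ‖l‖ = 1 → Pmat π l * (Pmat π l)ᴴ = 1 ∧ (Pmat π l).det = 1) ∧
    Pmat π 1 = 1 ∧
    Matrix.of (fun i j => deriv (fun l => Pmat π l i j) 1)
      = ((1 : ℂ) + (‖π‖ : ℂ) ^ 2)⁻¹ •
        !![1 - (‖π‖ : ℂ) ^ 2, -2 * π;
           -2 * starRingEnd ℂ π, (‖π‖ : ℂ) ^ 2 - 1] ∧
    Complex.I • (((1 : ℂ) + (‖π‖ : ℂ) ^ 2)⁻¹ •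
        !![1 - (‖π‖ : ℂ) ^ 2, -2 * π;
           -2 * starRingEnd ℂ π, (‖π‖ : ℂ) ^ 2 - 1])
      = toSu2 (fun k =>
          2 * ((1 + ‖π‖ ^ 2)⁻¹ * ![2 * π.re, 2 * π.im, 1 - ‖π‖ ^ 2] k)) :=
  Pmat_properties_general π
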